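/- arXiv:1806.04119 — 4 statements merged into one kernel-verified Lean document; each statement's English description precedes it below -/
import Mathlib

section
/- Let I be a nonempty index set, (Ω, ℱ, P) a probability space, {A_M : M ∈ I} a family of events, and α ∈ [0,1]. Then the following are equivalent: (1) for every measurable random selection M̂ : Ω → I, P(ω ∈ A_{M̂(ω)}) ≥ 1 − α; (2) P(⋂_{M ∈ I} A_M) ≥ 1 − α. -/
open MeasureTheory

/-
A selection can only cover when every `A M` does, since `{ω | ω ∈ A (M̂ ω)} ⊇ ⋂ M, A M`.
Conversely, over a finite index set there is a measurable "adversarial" selection that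
picks an index `M` with `ω ∉ A M` whenever one exists; its coverage event is exactly
`⋂ M, A M`. It is built by running through the indices and overwriting the current choice
by `M` on the measurable set `(A M)ᶜ`.
-/

section

variable {Ω ι : Type*} [MeasurableSpace Ω] [MeasurableSpace ι]

theorem exists_measurable_mem_biInter_of_mem [Nonempty ι] (A : ι → Set Ω)
    (hA : ∀ i, MeasurableSet (A i)) (s : Finset ι) :
    ∃ f : Ω → ι, Measurable f ∧ ∀ ω, ω ∈ A (f ω) → ω ∈ ⋂ i ∈ s, A i := by
  classical
  induction s using Finset.induction_on with
  | empty => exact ⟨fun _ => Classical.arbitrary ι, measurable_const, by simp⟩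
  | insert a s _ ih =>
    obtain ⟨f, hf, hfA⟩ := ih
    refine ⟨(A a)ᶜ.piecewise (fun _ => a) f,
      Measurable.piecewise (hA a).compl measurable_const hf, fun ω hω => ?_⟩
    have ha : ω ∈ A a := by
      by_contra ha
      rw [Set.piecewise_eq_of_mem _ _ _ ha] at hω
      exact ha hω
    rw [Set.piecewise_eq_of_notMem _ _ _ (not_not.mpr ha)] at hω
    rw [Finset.set_biInter_insert]
    exact ⟨ha, hfA ω hω⟩

theorem exists_measurable_setOf_mem_eq_iInter [Finite ι] [Nonempty ι] (A : ι → Set Ω)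
    (hA : ∀ i, MeasurableSet (A i)) :
    ∃ f : Ω → ι, Measurable f ∧ {ω | ω ∈ A (f ω)} = ⋂ i, A i := by
  have := Fintype.ofFinite ι
  obtain ⟨f, hf, hfA⟩ := exists_measurable_mem_biInter_of_mem A hA Finset.univ
  refine ⟨f, hf, Set.Subset.antisymm (fun ω hω => ?_) fun ω hω => Set.mem_iInter.mp hω _⟩
  simpa using hfA ω hω

end

theorem stmt0_general {Ω I : Type*} [Fintype I] [Nonempty I]
    [MeasurableSpace Ω] [MeasurableSpace I]
    (P : Measure Ω)
    (A : I → Set Ω) (hA : ∀ M, MeasurableSet (A M))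
    (α : ℝ) :
    (∀ Mhat : Ω → I, Measurable Mhat →
        ENNReal.ofReal (1 - α) ≤ P {ω | ω ∈ A (Mhat ω)}) ↔
      ENNReal.ofReal (1 - α) ≤ P (⋂ M, A M) := by
  constructor
  · intro hcover
    obtain ⟨Mhat, hMhat, hEq⟩ := exists_measurable_setOf_mem_eq_iInter A hA
    simpa [hEq] using hcover Mhat hMhat
  · intro h Mhat _
    exact h.trans (measure_mono fun ω hω => Set.mem_iInter.mp hω _)

theorem stmt0 {Ω I : Type*} [Fintype I] [Nonempty I]
    [MeasurableSpace Ω] [MeasurableSpace I] [MeasurableSingletonClass I]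
    (P : Measure Ω) [IsProbabilityMeasure P]
    (A : I → Set Ω) (hA : ∀ M, MeasurableSet (A M))
    (α : ℝ) (hα : α ∈ Set.Icc (0 : ℝ) 1) :
    (∀ Mhat : Ω → I, Measurable Mhat →
        ENNReal.ofReal (1 - α) ≤ P {ω | ω ∈ A (Mhat ω)}) ↔
      ENNReal.ofReal (1 - α) ≤ P (⋂ M, A M) :=
  stmt0_general P A hA α
end

section
/- Let Σ̂, Σ ∈ ℝ^{p×p} be symmetric, Γ̂, Γ ∈ ℝ^p, and define D^Σ = ∥Σ̂ − Σ∥_∞, D^Γ = ∥Γ̂ − Γ∥_∞. Let Λ(k) = min over M ⊆ {1,…,p} with 1 ≤ |M| ≤ k of λ_min(Σ(M)). Suppose k ≥ 1 satisfies k D^Σ < Λ(k). Then for every M with 1 ≤ |M| ≤ k, and β̂_M, β_M satisfying Σ̂(M)β̂_M = Γ̂(M) and Σ(M)β_M = Γ(M), we have ∥β̂_M − β_M∥₁ ≤ |M| (D^Γ + D^Σ ∥β_M∥₁) / (Λ(k) − k D^Σ). -/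
/-!
With `δ = β̂ - β`, subtracting the two normal equations gives `Σ̂ δ = (Γ̂ - Γ) - (Σ̂ - Σ) β`.
Testing against `δ` bounds `δᵀ Σ̂ δ` above by `‖δ‖₁ (D^Γ + D^Σ ‖β‖₁)`, while
`δᵀ Σ̂ δ ≥ δᵀ Σ δ - D^Σ ‖δ‖₁² ≥ Λ ‖δ‖₂² - D^Σ ‖δ‖₁²`. Cauchy–Schwarz `‖δ‖₁² ≤ |M| ‖δ‖₂²`
turns the two bounds into `(Λ - |M| D^Σ) ‖δ‖₁² ≤ |M| ‖δ‖₁ (D^Γ + D^Σ ‖β‖₁)`, and `|M| ≤ k`.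
-/

open Matrix Finset

section PerturbedLinearSystem

variable {ι : Type*} [Fintype ι]

theorem abs_dotProduct_le_mul_sum_abs {v w : ι → ℝ} {D : ℝ} (hv : ∀ i, |v i| ≤ D) :
    |v ⬝ᵥ w| ≤ D * ∑ i, |w i| :=
  calc |v ⬝ᵥ w| ≤ ∑ i, |v i * w i| := abs_sum_le_sum_abs _ _
    _ ≤ ∑ i, D * |w i| := sum_le_sum fun i _ => by
        rw [abs_mul]; exact mul_le_mul_of_nonneg_right (hv i) (abs_nonneg _)
    _ = D * ∑ i, |w i| := (mul_sum _ _ _).symm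

theorem abs_mulVec_apply_le_mul_sum_abs {A : Matrix ι ι ℝ} {D : ℝ} (hA : ∀ i j, |A i j| ≤ D)
    (w : ι → ℝ) (i : ι) : |(A *ᵥ w) i| ≤ D * ∑ j, |w j| :=
  abs_dotProduct_le_mul_sum_abs (hA i)

theorem abs_dotProduct_mulVec_le_mul_sq_sum_abs {A : Matrix ι ι ℝ} {D : ℝ}
    (hA : ∀ i j, |A i j| ≤ D) (v : ι → ℝ) : |v ⬝ᵥ (A *ᵥ v)| ≤ D * (∑ i, |v i|) ^ 2 := by
  rw [dotProduct_comm, sq, ← mul_assoc]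
  exact abs_dotProduct_le_mul_sum_abs (abs_mulVec_apply_le_mul_sum_abs hA v)

theorem sq_sum_abs_le_card_mul_dotProduct_self (v : ι → ℝ) :
    (∑ i, |v i|) ^ 2 ≤ Fintype.card ι * (v ⬝ᵥ v) := by
  have := sq_sum_le_card_mul_sum_sq (s := univ) (f := fun i => |v i|)
  simpa only [card_univ, dotProduct, sq, abs_mul_abs_self] using this

theorem le_div_of_mul_sq_le_mul {T R c : ℝ} (hT : 0 ≤ T) (hR : 0 ≤ R) (hc : 0 < c)
    (h : c * T ^ 2 ≤ T * R) : T ≤ R / c := by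
  rw [le_div_iff₀ hc]
  rcases hT.eq_or_lt with rfl | hT
  · simpa using hR
  · exact le_of_mul_le_mul_left (by nlinarith) hT

theorem sum_abs_sub_le_of_mulVec_eq [Nonempty ι] {A Ah : Matrix ι ι ℝ} {b bh x xh : ι → ℝ}
    {Λ DA Db : ℝ}
    (hΛ : ∀ θ, Λ * (θ ⬝ᵥ θ) ≤ θ ⬝ᵥ (A *ᵥ θ))
    (hDA : ∀ i j, |Ah i j - A i j| ≤ DA) (hDb : ∀ i, |bh i - b i| ≤ Db)
    (hgap : Fintype.card ι * DA < Λ) (hx : A *ᵥ x = b) (hxh : Ah *ᵥ xh = bh) :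
    ∑ i, |xh i - x i| ≤ Fintype.card ι * (Db + DA * ∑ i, |x i|) / (Λ - Fintype.card ι * DA) := by
  set n : ℝ := (Fintype.card ι : ℝ)
  set δ := xh - x
  set T := ∑ i, |δ i|
  set r := (bh - b) - (Ah - A) *ᵥ x
  obtain ⟨i₀⟩ := ‹Nonempty ι›
  have hDA0 : 0 ≤ DA := (abs_nonneg _).trans (hDA i₀ i₀)
  have hDb0 : 0 ≤ Db := (abs_nonneg _).trans (hDb i₀)
  have hresidual : Ah *ᵥ δ = r := by
    simp only [δ, r, mulVec_sub, sub_mulVec, hx, hxh]; abel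
  have hr : ∀ i, |r i| ≤ Db + DA * ∑ i, |x i| := fun i =>
    (abs_sub _ _).trans
      (add_le_add (hDb i) (abs_mulVec_apply_le_mul_sum_abs (A := Ah - A) hDA x i))
  have hupper : δ ⬝ᵥ (Ah *ᵥ δ) ≤ T * (Db + DA * ∑ i, |x i|) := by
    rw [hresidual, dotProduct_comm, mul_comm]
    exact (le_abs_self _).trans (abs_dotProduct_le_mul_sum_abs hr)
  have hlower : Λ * (δ ⬝ᵥ δ) - DA * T ^ 2 ≤ δ ⬝ᵥ (Ah *ᵥ δ) := by
    have hsplit : δ ⬝ᵥ (Ah *ᵥ δ) = δ ⬝ᵥ (A *ᵥ δ) + δ ⬝ᵥ ((Ah - A) *ᵥ δ) := by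
      rw [sub_mulVec, dotProduct_sub]; ring
    have := (abs_le.mp (abs_dotProduct_mulVec_le_mul_sq_sum_abs (A := Ah - A) hDA δ)).1
    linarith [hΛ δ]
  have hCS : T ^ 2 ≤ n * (δ ⬝ᵥ δ) := sq_sum_abs_le_card_mul_dotProduct_self δ
  have hn0 : 0 ≤ n := Nat.cast_nonneg _
  have hΛ0 : 0 ≤ Λ := (mul_nonneg hn0 hDA0).trans hgap.le
  have hquadratic : (Λ - n * DA) * T ^ 2 ≤ T * (n * (Db + DA * ∑ i, |x i|)) := by
    nlinarith [mul_le_mul_of_nonneg_left hCS hΛ0,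
      mul_le_mul_of_nonneg_left (hlower.trans hupper) hn0]
  exact le_div_of_mul_sq_le_mul (sum_nonneg fun i _ => abs_nonneg _) (by positivity)
    (by linarith) hquadratic

end PerturbedLinearSystem

theorem stmt7_general {p : ℕ} (Sh S : Fin p → Fin p → ℝ) (Gh G : Fin p → ℝ)
    (k : ℕ) (Λ : ℝ)
    (hΛ : ∀ M : Finset (Fin p), 1 ≤ M.card → M.card ≤ k →
      ∀ θ : ↥M → ℝ, Λ * ∑ i : M, (θ i) ^ 2 ≤ ∑ i : M, ∑ j : M, θ i * S i.1 j.1 * θ j)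
    (hgap : (k : ℝ) * ‖Sh - S‖ < Λ)
    (M : Finset (Fin p)) (hM1 : 1 ≤ M.card) (hMk : M.card ≤ k)
    (βh β : ↥M → ℝ)
    (hβh : ∀ i : M, ∑ j : M, Sh i.1 j.1 * βh j = Gh i.1)
    (hβ : ∀ i : M, ∑ j : M, S i.1 j.1 * β j = G i.1) :
    ∑ i : M, |βh i - β i| ≤
      (M.card : ℝ) * (‖Gh - G‖ + ‖Sh - S‖ * ∑ i : M, |β i|) /
        (Λ - (k : ℝ) * ‖Sh - S‖) := by
  have : Nonempty M := (card_pos.mp hM1).coe_sort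
  have hnk : (M.card : ℝ) ≤ k := by exact_mod_cast hMk
  have hDS : ∀ i j, |Sh i j - S i j| ≤ ‖Sh - S‖ := fun i j => by
    simpa using (norm_le_pi_norm ((Sh - S) i) j).trans (norm_le_pi_norm (Sh - S) i)
  have hDG : ∀ i, |Gh i - G i| ≤ ‖Gh - G‖ := fun i => by
    simpa using norm_le_pi_norm (Gh - G) i
  have hcoercive :
      ∀ θ : M → ℝ, Λ * (θ ⬝ᵥ θ) ≤ θ ⬝ᵥ (submatrix S Subtype.val Subtype.val *ᵥ θ) := fun θ => by
    rw [← toBilin'_apply', toBilin'_apply]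
    have hθ := hΛ M hM1 hMk θ
    simp only [sq] at hθ
    exact hθ
  have hbound := sum_abs_sub_le_of_mulVec_eq (Ah := submatrix Sh Subtype.val Subtype.val)
    (b := fun i : M => G i) (bh := fun i : M => Gh i) (x := β) (xh := βh) hcoercive
    (fun i j => hDS i j) (fun i => hDG i)
    (by rw [Fintype.card_coe]
        nlinarith [mul_le_mul_of_nonneg_right hnk (norm_nonneg (Sh - S))])
    (funext hβ) (funext hβh)
  rw [Fintype.card_coe] at hbound
  refine hbound.trans (div_le_div_of_nonneg_left (by positivity) (by linarith) ?_)
  gcongr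

theorem stmt7 {p : ℕ} (Sh S : Fin p → Fin p → ℝ) (Gh G : Fin p → ℝ)
    (hSh : ∀ i j, Sh i j = Sh j i) (hS : ∀ i j, S i j = S j i)
    (k : ℕ) (Λ : ℝ)
    (hΛ : ∀ M : Finset (Fin p), 1 ≤ M.card → M.card ≤ k →
      ∀ θ : ↥M → ℝ, Λ * ∑ i : M, (θ i) ^ 2 ≤ ∑ i : M, ∑ j : M, θ i * S i.1 j.1 * θ j)
    (hgap : (k : ℝ) * ‖Sh - S‖ < Λ)
    (M : Finset (Fin p)) (hM1 : 1 ≤ M.card) (hMk : M.card ≤ k)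
    (βh β : ↥M → ℝ)
    (hβh : ∀ i : M, ∑ j : M, Sh i.1 j.1 * βh j = Gh i.1)
    (hβ : ∀ i : M, ∑ j : M, S i.1 j.1 * β j = G i.1) :
    ∑ i : M, |βh i - β i| ≤
      (M.card : ℝ) * (‖Gh - G‖ + ‖Sh - S‖ * ∑ i : M, |β i|) /
        (Λ - (k : ℝ) * ‖Sh - S‖) :=
  stmt7_general Sh S Gh G k Λ hΛ hgap M hM1 hMk βh β hβh hβ
end

section
/- Under the setting of the previous lemma (symmetric Σ̂, Σ ∈ ℝ^{p×p}, vectors Γ̂, Γ ∈ ℝ^p, D^Σ = ∥Σ̂ − Σ∥_∞, D^Γ = ∥Γ̂ − Γ∥_∞, Λ(k) = min_{|M|≤k} λ_min(Σ(M)), and k D^Σ < Λ(k)), for every M with 1 ≤ |M| ≤ k, the relative error satisfies |(D^Γ + D^Σ∥β̂_M∥₁)/(D^Γ + D^Σ∥β_M∥₁) − 1| ≤ k D^Σ / (Λ(k) − k D^Σ), provided D^Γ + D^Σ∥β_M∥₁ > 0. -/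
/-!
Put `δ = β̂_M - β_M`. Subtracting the two normal equations gives `Σ̂ δ = (Γ̂ - Γ) - (Σ̂ - Σ) β_M`, whose
entries are bounded by `c = D^Γ + D^Σ ‖β_M‖₁`, so `δᵀ Σ̂ δ ≤ c ‖δ‖₁`. On the other hand
`δᵀ Σ̂ δ ≥ δᵀ Σ δ - D^Σ ‖δ‖₁² ≥ Λ ‖δ‖₂² - D^Σ ‖δ‖₁²` and `‖δ‖₁² ≤ k ‖δ‖₂²`, whence
`(Λ - k D^Σ) ‖δ‖₁ ≤ k c`. Since `|‖β̂_M‖₁ - ‖β_M‖₁| ≤ ‖δ‖₁`, the numerator of the ratio differs from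
its denominator `c` by at most `D^Σ k c / (Λ - k D^Σ)`.
-/

open Matrix

section Perturbation

variable {ι : Type*} [Fintype ι]

theorem abs_dotProduct_le_mul_sum_abs_s8 {x y : ι → ℝ} {c : ℝ} (hy : ∀ i, |y i| ≤ c) :
    |x ⬝ᵥ y| ≤ c * ∑ i, |x i| := by
  rw [Finset.mul_sum]
  calc |x ⬝ᵥ y| ≤ ∑ i, |x i * y i| := Finset.abs_sum_le_sum_abs _ _
    _ ≤ ∑ i, c * |x i| := Finset.sum_le_sum fun i _ => by
        rw [abs_mul, mul_comm]
        exact mul_le_mul_of_nonneg_right (hy i) (abs_nonneg _)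

theorem abs_mulVec_apply_le {κ : Type*} {E : Matrix κ ι ℝ} {D : ℝ} (hE : ∀ i j, |E i j| ≤ D)
    (x : ι → ℝ) (i : κ) : |(E *ᵥ x) i| ≤ D * ∑ j, |x j| := by
  rw [mulVec, dotProduct_comm]
  exact abs_dotProduct_le_mul_sum_abs_s8 (hE i)

theorem abs_dotProduct_mulVec_le {E : Matrix ι ι ℝ} {D : ℝ} (hE : ∀ i j, |E i j| ≤ D)
    (x : ι → ℝ) : |x ⬝ᵥ E *ᵥ x| ≤ D * (∑ i, |x i|) ^ 2 :=
  (abs_dotProduct_le_mul_sum_abs_s8 (abs_mulVec_apply_le hE x)).trans_eq (by ring)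

theorem abs_sum_abs_sub_sum_abs_le (x y : ι → ℝ) :
    |(∑ i, |y i|) - (∑ i, |x i|)| ≤ ∑ i, |y i - x i| := by
  rw [← Finset.sum_sub_distrib]
  exact (Finset.abs_sum_le_sum_abs _ _).trans
    (Finset.sum_le_sum fun i _ => abs_abs_sub_abs_le_abs_sub _ _)

theorem mulVec_sub_eq_of_mulVec_eq {A Ah : Matrix ι ι ℝ} {b bh x xh : ι → ℝ}
    (hx : A *ᵥ x = b) (hxh : Ah *ᵥ xh = bh) :
    Ah *ᵥ (xh - x) = (bh - b) - (Ah - A) *ᵥ x := by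
  rw [mulVec_sub, sub_mulVec, hx, hxh]
  abel

theorem sub_mul_sum_abs_le_of_quadratic_bounds {Λ D c L q : ℝ} {k : ℕ} (hL : 0 ≤ L) (hc : 0 ≤ c)
    (hD : 0 ≤ D) (hgap : k * D < Λ) (hquad : Λ * q ≤ c * L + D * L ^ 2) (hcard : L ^ 2 ≤ k * q) :
    (Λ - k * D) * L ≤ k * c := by
  have hΛ : 0 ≤ Λ := (by positivity : (0 : ℝ) ≤ k * D).trans hgap.le
  have hsq : (Λ - k * D) * L * L ≤ k * c * L := by
    nlinarith [mul_le_mul_of_nonneg_left hcard hΛ, mul_le_mul_of_nonneg_left hquad (Nat.cast_nonneg k)]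
  rcases hL.eq_or_lt with rfl | hL
  · simpa using mul_nonneg (Nat.cast_nonneg k) hc
  · exact le_of_mul_le_mul_right hsq hL

theorem sub_mul_sum_abs_sub_le {A Ah : Matrix ι ι ℝ} {b bh x xh : ι → ℝ} {D DG Λ : ℝ} {k : ℕ}
    (hA : ∀ i j, |Ah i j - A i j| ≤ D) (hb : ∀ i, |bh i - b i| ≤ DG) (hD : 0 ≤ D) (hDG : 0 ≤ DG)
    (hΛ : ∀ θ, Λ * ∑ i, θ i ^ 2 ≤ θ ⬝ᵥ A *ᵥ θ) (hk : Fintype.card ι ≤ k) (hgap : k * D < Λ)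
    (hx : A *ᵥ x = b) (hxh : Ah *ᵥ xh = bh) :
    (Λ - k * D) * ∑ i, |xh i - x i| ≤ k * (DG + D * ∑ i, |x i|) := by
  set δ := xh - x
  set c := DG + D * ∑ i, |x i|
  change (Λ - k * D) * ∑ i, |δ i| ≤ k * c
  have hres : ∀ i, |(Ah *ᵥ δ) i| ≤ c := fun i => by
    rw [mulVec_sub_eq_of_mulVec_eq hx hxh, Pi.sub_apply]
    exact (abs_sub _ _).trans (add_le_add (hb i) (abs_mulVec_apply_le hA x i))
  have hupper : δ ⬝ᵥ Ah *ᵥ δ ≤ c * ∑ i, |δ i| :=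
    (le_abs_self _).trans (abs_dotProduct_le_mul_sum_abs_s8 hres)
  have hpert : |δ ⬝ᵥ (Ah - A) *ᵥ δ| ≤ D * (∑ i, |δ i|) ^ 2 :=
    abs_dotProduct_mulVec_le hA δ
  have hsplit : δ ⬝ᵥ A *ᵥ δ = δ ⬝ᵥ Ah *ᵥ δ - δ ⬝ᵥ (Ah - A) *ᵥ δ := by
    rw [sub_mulVec, dotProduct_sub]
    ring
  have hcard : (∑ i, |δ i|) ^ 2 ≤ k * ∑ i, δ i ^ 2 := by
    calc (∑ i, |δ i|) ^ 2 ≤ Fintype.card ι * ∑ i, |δ i| ^ 2 := sq_sum_le_card_mul_sum_sq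
      _ ≤ k * ∑ i, δ i ^ 2 := by
        simp only [sq_abs]
        gcongr
  refine sub_mul_sum_abs_le_of_quadratic_bounds (Finset.sum_nonneg fun i _ => abs_nonneg _)
    (by positivity) hD hgap ?_ hcard
  linarith [hΛ δ, neg_abs_le (δ ⬝ᵥ (Ah - A) *ᵥ δ)]

theorem abs_add_mul_sum_abs_div_sub_one_le {a D K g : ℝ} {x y : ι → ℝ} (hD : 0 ≤ D) (hg : 0 < g)
    (hpos : 0 < a + D * ∑ i, |x i|) (hyx : g * ∑ i, |y i - x i| ≤ K * (a + D * ∑ i, |x i|)) :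
    |(a + D * ∑ i, |y i|) / (a + D * ∑ i, |x i|) - 1| ≤ K * D / g := by
  rw [div_sub_one hpos.ne', abs_div, abs_of_pos hpos, div_le_div_iff₀ hpos hg]
  calc |a + D * ∑ i, |y i| - (a + D * ∑ i, |x i|)| * g
      = D * (g * |(∑ i, |y i|) - (∑ i, |x i|)|) := by
        rw [add_sub_add_left_eq_sub, ← mul_sub, abs_mul, abs_of_nonneg hD]
        ring
    _ ≤ D * (K * (a + D * ∑ i, |x i|)) := mul_le_mul_of_nonneg_left
        ((mul_le_mul_of_nonneg_left (abs_sum_abs_sub_sum_abs_le x y) hg.le).trans hyx) hD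
    _ = K * D * (a + D * ∑ i, |x i|) := by ring

end Perturbation

theorem abs_sub_apply_apply_le_norm_sub {m n : Type*} [Fintype m] [Fintype n]
    (A B : m → n → ℝ) (i : m) (j : n) : |A i j - B i j| ≤ ‖A - B‖ := by
  simpa only [Real.norm_eq_abs, Pi.sub_apply] using
    (norm_le_pi_norm ((A - B) i) j).trans (norm_le_pi_norm (A - B) i)

theorem abs_sub_apply_le_norm_sub {m : Type*} [Fintype m] (a b : m → ℝ) (i : m) :
    |a i - b i| ≤ ‖a - b‖ := by
  simpa only [Real.norm_eq_abs, Pi.sub_apply] using norm_le_pi_norm (a - b) i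

theorem dotProduct_mulVec_eq_sum_sum {ι : Type*} [Fintype ι] (A : Matrix ι ι ℝ) (θ : ι → ℝ) :
    θ ⬝ᵥ A *ᵥ θ = ∑ i, ∑ j, θ i * A i j * θ j := by
  simp only [dotProduct, mulVec, Finset.mul_sum, mul_assoc]

theorem stmt8_general {p : ℕ} (Sh S : Fin p → Fin p → ℝ) (Gh G : Fin p → ℝ)
    (k : ℕ) (Λ : ℝ)
    (hΛ : ∀ M : Finset (Fin p), 1 ≤ M.card → M.card ≤ k →
      ∀ θ : ↥M → ℝ, Λ * ∑ i : M, (θ i) ^ 2 ≤ ∑ i : M, ∑ j : M, θ i * S i.1 j.1 * θ j)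
    (hgap : (k : ℝ) * ‖Sh - S‖ < Λ)
    (M : Finset (Fin p)) (hM1 : 1 ≤ M.card) (hMk : M.card ≤ k)
    (βh β : ↥M → ℝ)
    (hβh : ∀ i : M, ∑ j : M, Sh i.1 j.1 * βh j = Gh i.1)
    (hβ : ∀ i : M, ∑ j : M, S i.1 j.1 * β j = G i.1)
    (hpos : 0 < ‖Gh - G‖ + ‖Sh - S‖ * ∑ i : M, |β i|) :
    |(‖Gh - G‖ + ‖Sh - S‖ * ∑ i : M, |βh i|) /
        (‖Gh - G‖ + ‖Sh - S‖ * ∑ i : M, |β i|) - 1| ≤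
      (k : ℝ) * ‖Sh - S‖ / (Λ - (k : ℝ) * ‖Sh - S‖) := by
  have hl1 := sub_mul_sum_abs_sub_le (A := Matrix.of fun i j : M => S i j)
    (Ah := Matrix.of fun i j : M => Sh i j) (b := fun i : M => G i) (bh := fun i : M => Gh i)
    (fun i j => abs_sub_apply_apply_le_norm_sub Sh S i j) (fun i => abs_sub_apply_le_norm_sub Gh G i)
    (norm_nonneg _) (norm_nonneg _)
    (fun θ => (hΛ M hM1 hMk θ).trans_eq (dotProduct_mulVec_eq_sum_sum _ θ).symm)
    (by simpa using hMk) hgap (funext hβ) (funext hβh)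
  exact abs_add_mul_sum_abs_div_sub_one_le (norm_nonneg _) (by linarith) hpos hl1

theorem stmt8 {p : ℕ} (Sh S : Fin p → Fin p → ℝ) (Gh G : Fin p → ℝ)
    (hSh : ∀ i j, Sh i j = Sh j i) (hS : ∀ i j, S i j = S j i)
    (k : ℕ) (Λ : ℝ)
    (hΛ : ∀ M : Finset (Fin p), 1 ≤ M.card → M.card ≤ k →
      ∀ θ : ↥M → ℝ, Λ * ∑ i : M, (θ i) ^ 2 ≤ ∑ i : M, ∑ j : M, θ i * S i.1 j.1 * θ j)
    (hgap : (k : ℝ) * ‖Sh - S‖ < Λ)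
    (M : Finset (Fin p)) (hM1 : 1 ≤ M.card) (hMk : M.card ≤ k)
    (βh β : ↥M → ℝ)
    (hβh : ∀ i : M, ∑ j : M, Sh i.1 j.1 * βh j = Gh i.1)
    (hβ : ∀ i : M, ∑ j : M, S i.1 j.1 * β j = G i.1)
    (hpos : 0 < ‖Gh - G‖ + ‖Sh - S‖ * ∑ i : M, |β i|) :
    |(‖Gh - G‖ + ‖Sh - S‖ * ∑ i : M, |βh i|) /
        (‖Gh - G‖ + ‖Sh - S‖ * ∑ i : M, |β i|) - 1| ≤
      (k : ℝ) * ‖Sh - S‖ / (Λ - (k : ℝ) * ‖Sh - S‖) :=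
  stmt8_general Sh S Gh G k Λ hΛ hgap M hM1 hMk βh β hβh hβ hpos
end

section
/- Let Σ̂ ∈ ℝ^{p×p} be symmetric satisfying the Restricted Isometry Property of order k with constant δ ∈ [0,1): ∥Σ̂(M) − I_{|M|}∥_op ≤ δ for all M with |M| ≤ k. Let Γ̂, Γ ∈ ℝ^p, D^Γ = ∥Γ̂ − Γ∥_∞, and suppose for a model M with |M| ≤ k: Σ̂(M)β̂_M = Γ̂(M), and ∥Σ̂(M)(β̂_M − β_M)∥_∞ ≤ D^Γ and ∥β̂_M − β_M∥₂ ≤ √k · D^Γ / Λ(k) with Λ(k) = min_{|M'|≤k} λ_min(Σ̂(M')). Then ∥β̂_M − β_M∥_∞ ≤ D^Γ (1 + δ√k/(1 − δ)). -/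
/-! The residual `Σ̂(M)θ − θ` of `θ = β̂_M − β_M` has ℓ₂ norm at most `δ‖θ‖₂` by the restricted
isometry property, hence each of its coordinates is at most `δ‖θ‖₂`. Writing
`θ i = (Σ̂(M)θ)_i − (Σ̂(M)θ − θ)_i` then bounds `|θ i|` by `D^Γ + δ‖θ‖₂`, and
`‖θ‖₂ ≤ √k D^Γ / Λ ≤ √k D^Γ / (1 − δ)`. -/

open Finset

theorem abs_le_sqrt_sum_sq {ι : Type*} [Fintype ι] (f : ι → ℝ) (i : ι) :
    |f i| ≤ √(∑ j, f j ^ 2) :=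
  Real.abs_le_sqrt (single_le_sum (f := fun j => f j ^ 2) (fun j _ => sq_nonneg (f j))
    (mem_univ i))

theorem abs_le_abs_mul_add_of_near_isometry {ι : Type*} [Fintype ι] (A : ι → ι → ℝ)
    (θ : ι → ℝ) {δ r : ℝ} (hδ : 0 ≤ δ)
    (hA : √(∑ i, (∑ j, A i j * θ j - θ i) ^ 2) ≤ δ * √(∑ i, θ i ^ 2))
    (hθ : √(∑ i, θ i ^ 2) ≤ r) (i : ι) :
    |θ i| ≤ |∑ j, A i j * θ j| + δ * r := by
  have hresidual : |∑ j, A i j * θ j - θ i| ≤ δ * r :=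
    calc |∑ j, A i j * θ j - θ i|
        ≤ √(∑ i, (∑ j, A i j * θ j - θ i) ^ 2) :=
          abs_le_sqrt_sum_sq (fun i => ∑ j, A i j * θ j - θ i) i
      _ ≤ δ * √(∑ i, θ i ^ 2) := hA
      _ ≤ δ * r := mul_le_mul_of_nonneg_left hθ hδ
  calc |θ i| = |∑ j, A i j * θ j - (∑ j, A i j * θ j - θ i)| := by rw [sub_sub_cancel]
    _ ≤ |∑ j, A i j * θ j| + |∑ j, A i j * θ j - θ i| := abs_sub _ _
    _ ≤ |∑ j, A i j * θ j| + δ * r := by gcongr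

theorem stmt11_general {p : ℕ} (Sh : Fin p → Fin p → ℝ)
    (k : ℕ) (δ : ℝ) (hδ0 : 0 ≤ δ) (hδ1 : δ < 1)
    (hRIP : ∀ M : Finset (Fin p), M.card ≤ k → ∀ θ : ↥M → ℝ,
      Real.sqrt (∑ i : M, ((∑ j : M, Sh i.1 j.1 * θ j) - θ i) ^ 2) ≤
        δ * Real.sqrt (∑ i : M, (θ i) ^ 2))
    (Gh G : Fin p → ℝ) (Λ : ℝ) (hΛδ : 1 - δ ≤ Λ)
    (M : Finset (Fin p)) (hMk : M.card ≤ k)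
    (βh β : ↥M → ℝ)
    (h1 : ∀ i : M, |∑ j : M, Sh i.1 j.1 * (βh j - β j)| ≤ ‖Gh - G‖)
    (h2 : Real.sqrt (∑ i : M, (βh i - β i) ^ 2) ≤
      Real.sqrt (k : ℝ) * ‖Gh - G‖ / Λ) :
    ∀ i : M, |βh i - β i| ≤
      ‖Gh - G‖ * (1 + δ * Real.sqrt (k : ℝ) / (1 - δ)) := by
  intro i
  have hδ1' : 0 < 1 - δ := sub_pos.mpr hδ1
  have hl2 : √(∑ i : M, (βh i - β i) ^ 2) ≤ √k * ‖Gh - G‖ / (1 - δ) :=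
    h2.trans (div_le_div_of_nonneg_left (by positivity) hδ1' hΛδ)
  calc |βh i - β i|
      ≤ |∑ j : M, Sh i.1 j.1 * (βh j - β j)| + δ * (√k * ‖Gh - G‖ / (1 - δ)) :=
        abs_le_abs_mul_add_of_near_isometry (fun i j : M => Sh i.1 j.1) (fun j => βh j - β j)
          hδ0 (hRIP M hMk _) hl2 i
    _ ≤ ‖Gh - G‖ + δ * (√k * ‖Gh - G‖ / (1 - δ)) := by gcongr; exact h1 i
    _ = ‖Gh - G‖ * (1 + δ * √k / (1 - δ)) := by ring

theorem stmt11 {p : ℕ} (Sh : Fin p → Fin p → ℝ) (hSh : ∀ i j, Sh i j = Sh j i)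
    (k : ℕ) (δ : ℝ) (hδ0 : 0 ≤ δ) (hδ1 : δ < 1)
    (hRIP : ∀ M : Finset (Fin p), M.card ≤ k → ∀ θ : ↥M → ℝ,
      Real.sqrt (∑ i : M, ((∑ j : M, Sh i.1 j.1 * θ j) - θ i) ^ 2) ≤
        δ * Real.sqrt (∑ i : M, (θ i) ^ 2))
    (Gh G : Fin p → ℝ) (Λ : ℝ) (hΛpos : 0 < Λ) (hΛδ : 1 - δ ≤ Λ)
    (M : Finset (Fin p)) (hMk : M.card ≤ k)
    (βh β : ↥M → ℝ)
    (hβh : ∀ i : M, ∑ j : M, Sh i.1 j.1 * βh j = Gh i.1)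
    (h1 : ∀ i : M, |∑ j : M, Sh i.1 j.1 * (βh j - β j)| ≤ ‖Gh - G‖)
    (h2 : Real.sqrt (∑ i : M, (βh i - β i) ^ 2) ≤
      Real.sqrt (k : ℝ) * ‖Gh - G‖ / Λ) :
    ∀ i : M, |βh i - β i| ≤
      ‖Gh - G‖ * (1 + δ * Real.sqrt (k : ℝ) / (1 - δ)) :=
  stmt11_general Sh k δ hδ0 hδ1 hRIP Gh G Λ hΛδ M hMk βh β h1 h2
end
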